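/- Let p and q be odd natural numbers. The number of pair partitions of {1,...,p+q} with exactly one cross equals p·q·(p-2)!!·(q-2)!!. -/

import Mathlib

open Finset

/-- A block of a partition of `Fin (p+q)` is a cross if it meets both
`{0,...,p-1}` and `{p,...,p+q-1}`. -/
def IsCross (p q : ℕ) (b : Finset (Fin (p + q))) : Prop :=
  (∃ i ∈ b, (i : ℕ) < p) ∧ ∃ i ∈ b, p ≤ (i : ℕ)

instance (p q : ℕ) (b : Finset (Fin (p + q))) : Decidable (IsCross p q b) := by
  unfold IsCross; infer_instance

/-- The number of crosses of a partition of `Fin (p+q)`. -/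
def crossCount (p q : ℕ) (P : Finpartition (Finset.univ : Finset (Fin (p + q)))) : ℕ :=
  (P.parts.filter (IsCross p q)).card

/-!
A pair partition with exactly one cross is determined by its cross `{i, j}` (`p * q` choices)
together with a pair partition of the `p - 1` remaining left points and one of the `q - 1`
remaining right points. A set of `2 * n` points has `(2 * n - 1)‼` pair partitions: the partner
of a fixed point can be chosen in `2 * n - 1` ways, and what is left is a pair partition of
`2 * n - 2` points. Both counts are double countings of pairs (partition, distinguished part).
-/

open scoped Nat

theorem Nat.card_subtype_eq_card_mul {X β : Type*} [Finite X] {p : X → Prop} (t : Finset β)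
    (r : X → β → Prop) [∀ x b, Decidable (r x b)] {n : ℕ}
    (hX : ∀ x, p x → #{b ∈ t | r x b} = 1) (ht : ∀ b ∈ t, Nat.card {x // p x ∧ r x b} = n) :
    Nat.card {x // p x} = #t * n := by
  classical
  have := Fintype.ofFinite X
  have key := card_mul_eq_card_mul r (s := {x | p x}) (t := t) (m := 1) (n := n)
    (fun x hx => hX x (mem_filter.1 hx).2) fun b hb => by
      rw [bipartiteBelow, filter_filter, ← Fintype.card_subtype, ← Nat.card_eq_fintype_card]
      exact ht b hb
  rw [Nat.card_eq_fintype_card, Fintype.card_subtype, ← mul_one #_, key]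

theorem Nat.card_subtype_and_eq_of_equiv {α β : Type*} {r : β → Prop} (e : α ≃ Subtype r)
    {p : β → Prop} {q : α → Prop} (h : ∀ a, p (e a) ↔ q a) :
    Nat.card {x // p x ∧ r x} = Nat.card {a // q a} :=
  Nat.card_congr <| (Equiv.subtypeEquivRight fun _ => and_comm).trans <|
    (Equiv.subtypeSubtypeEquivSubtypeInter r p).symm.trans (e.subtypeEquiv fun a => (h a).symm).symm

namespace Finpartition

variable {α : Type*} [DecidableEq α] {s t u b : Finset α}

lemma avoid_parts_of_mem (P : Finpartition s) (hb : b ∈ P.parts) :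
    (P.avoid b).parts = P.parts.erase b := by
  ext c
  rw [mem_avoid, mem_erase]
  constructor
  · rintro ⟨d, hd, hdb, rfl⟩
    have hdb' : d ≠ b := by rintro rfl; exact hdb le_rfl
    have hdisj : Disjoint d b := P.disjoint hd hb hdb'
    rw [hdisj.sdiff_eq_left]
    exact ⟨hdb', hd⟩
  · rintro ⟨hcb, hc⟩
    have hdisj : Disjoint c b := P.disjoint hc hb hcb
    refine ⟨c, hc, fun hle => hcb ?_, hdisj.sdiff_eq_left⟩
    obtain ⟨x, hx⟩ := P.nonempty_of_mem_parts hc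
    exact P.eq_of_mem_parts hc hb hx (hle hx)

lemma notMem_parts_of_disjoint (Q : Finpartition u) (hb : b ≠ ∅) (hub : Disjoint u b) :
    b ∉ Q.parts :=
  fun h => hb (hub.symm.eq_bot_of_le (Q.le h))

def extendEquiv (hb : b ≠ ∅) (hub : Disjoint u b) (hs : u ∪ b = s) :
    Finpartition u ≃ {P : Finpartition s // b ∈ P.parts} where
  toFun Q := ⟨Q.extend hb hub hs, mem_insert_self b Q.parts⟩
  invFun P := (P.1.avoid b).copy (by rw [← hs, union_sdiff_right, hub.sdiff_eq_left])
  left_inv Q := by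
    ext1
    rw [copy_parts, avoid_parts_of_mem _ (mem_insert_self b Q.parts), extend_parts,
      erase_insert (Q.notMem_parts_of_disjoint hb hub)]
  right_inv P := Subtype.ext <| Finpartition.ext <| by
    rw [extend_parts, copy_parts, avoid_parts_of_mem _ P.2, insert_erase P.2]

lemma extendEquiv_apply_parts (hb : b ≠ ∅) (hub : Disjoint u b) (hs : u ∪ b = s)
    (Q : Finpartition u) : (extendEquiv hb hub hs Q).1.parts = insert b Q.parts := rfl

def disjUnion (P : Finpartition s) (Q : Finpartition t) (hst : Disjoint s t)
    (hu : s ∪ t = u) : Finpartition u where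
  parts := P.parts ∪ Q.parts
  supIndep := by
    rw [supIndep_iff_pairwiseDisjoint, coe_union]
    rintro c (hc | hc) d (hd | hd) hcd
    · exact P.disjoint hc hd hcd
    · exact hst.mono (P.le hc) (Q.le hd)
    · exact hst.symm.mono (Q.le hc) (P.le hd)
    · exact Q.disjoint hc hd hcd
  sup_parts := by rw [sup_union, P.sup_parts, Q.sup_parts, sup_eq_union, hu]
  bot_notMem h := (mem_union.1 h).elim (fun h => P.bot_notMem h) fun h => Q.bot_notMem h

lemma sup_filter_subset_eq (P : Finpartition u) (hP : ∀ c ∈ P.parts, c ⊆ s ∨ c ⊆ t)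
    (hst : Disjoint s t) (hu : s ∪ t = u) : {c ∈ P.parts | c ⊆ s}.sup id = s := by
  ext y
  simp only [mem_sup, mem_filter, id]
  constructor
  · rintro ⟨c, ⟨-, hcs⟩, hyc⟩
    exact hcs hyc
  · intro hys
    obtain ⟨c, hc, hyc⟩ := P.exists_mem (hu ▸ mem_union_left t hys)
    exact ⟨c, ⟨hc, (hP c hc).resolve_right fun hct => disjoint_left.1 hst hys (hct hyc)⟩, hyc⟩

lemma filter_parts_union_parts_subset (P : Finpartition s) (Q : Finpartition t)
    (hst : Disjoint s t) :
    {c ∈ P.parts ∪ Q.parts | c ⊆ s} = P.parts := by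
  rw [filter_union, filter_true_of_mem fun c => P.le, filter_false_of_mem, union_empty]
  intro c hc hcs
  obtain ⟨x, hx⟩ := Q.nonempty_of_mem_parts hc
  exact disjoint_left.1 hst (hcs hx) (Q.le hc hx)

def disjUnionEquiv (hst : Disjoint s t) (hu : s ∪ t = u) :
    Finpartition s × Finpartition t ≃ {P : Finpartition u // ∀ c ∈ P.parts, c ⊆ s ∨ c ⊆ t} where
  toFun PQ := ⟨PQ.1.disjUnion PQ.2 hst hu, fun c hc =>
    (mem_union.1 hc).imp (fun h => PQ.1.le h) fun h => PQ.2.le h⟩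
  invFun P := (P.1.ofSubset (filter_subset _ _) (P.1.sup_filter_subset_eq P.2 hst hu),
    P.1.ofSubset (filter_subset _ _) (P.1.sup_filter_subset_eq (fun c hc => (P.2 c hc).symm)
      hst.symm (union_comm t s ▸ hu)))
  left_inv PQ := by
    ext1 <;> ext1
    · exact filter_parts_union_parts_subset PQ.1 PQ.2 hst
    · exact (congrArg _ (union_comm _ _)).trans (filter_parts_union_parts_subset PQ.2 PQ.1 hst.symm)
  right_inv P := Subtype.ext <| Finpartition.ext <| by
    change {c ∈ P.1.parts | c ⊆ s} ∪ {c ∈ P.1.parts | c ⊆ t} = P.1.parts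
    rw [← filter_or, filter_true_of_mem P.2]

lemma disjUnionEquiv_apply_parts (hst : Disjoint s t) (hu : s ∪ t = u)
    (PQ : Finpartition s × Finpartition t) :
    (disjUnionEquiv hst hu PQ).1.parts = PQ.1.parts ∪ PQ.2.parts := rfl

def IsPairPartition (P : Finpartition s) : Prop := ∀ c ∈ P.parts, #c = 2

lemma isPairPartition_extendEquiv_iff (hb2 : #b = 2) (hb : b ≠ ∅) (hub : Disjoint u b)
    (hs : u ∪ b = s) (Q : Finpartition u) :
    (extendEquiv hb hub hs Q).1.IsPairPartition ↔ Q.IsPairPartition := by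
  rw [IsPairPartition, extendEquiv_apply_parts, forall_mem_insert, and_iff_right hb2]
  rfl

lemma isPairPartition_disjUnionEquiv_iff (hst : Disjoint s t) (hu : s ∪ t = u)
    (PQ : Finpartition s × Finpartition t) :
    (disjUnionEquiv hst hu PQ).1.IsPairPartition ↔
      PQ.1.IsPairPartition ∧ PQ.2.IsPairPartition := by
  rw [IsPairPartition, disjUnionEquiv_apply_parts, forall_mem_union]
  rfl

lemma card_isPairPartition_and_mem_parts (hb2 : #b = 2) (hub : Disjoint u b) (hs : u ∪ b = s) :
    Nat.card {P : Finpartition s // P.IsPairPartition ∧ b ∈ P.parts} =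
      Nat.card {Q : Finpartition u // Q.IsPairPartition} :=
  Nat.card_subtype_and_eq_of_equiv (extendEquiv (by rintro rfl; simp at hb2) hub hs)
    (isPairPartition_extendEquiv_iff hb2 _ hub hs)

lemma IsPairPartition.card_filter_pair_mem_parts {P : Finpartition s} (hP : P.IsPairPartition)
    {a : α} (ha : a ∈ s) : #{x ∈ s.erase a | {a, x} ∈ P.parts} = 1 := by
  have haP := P.mem_part_self.2 ha
  obtain ⟨x, hx⟩ : ∃ x, (P.part a).erase a = {x} :=
    card_eq_one.1 (by rw [card_erase_of_mem haP, hP _ (P.part_mem.2 ha)])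
  have hxP : x ∈ (P.part a).erase a := hx ▸ mem_singleton_self x
  rw [card_eq_one]
  refine ⟨x, ext fun y => ?_⟩
  simp only [mem_filter, mem_erase, mem_singleton]
  constructor
  · rintro ⟨⟨hya, -⟩, hy⟩
    have : y ∈ (P.part a).erase a := by
      rw [P.part_eq_of_mem hy (mem_insert_self a {y})]
      simp [hya]
    rwa [hx, mem_singleton] at this
  · rintro rfl
    refine ⟨⟨(mem_erase.1 hxP).1, P.part_subset a (mem_erase.1 hxP).2⟩, ?_⟩
    rw [← hx, insert_erase haP]
    exact P.part_mem.2 ha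

theorem card_isPairPartition {n : ℕ} (hs : #s = 2 * n) :
    Nat.card {P : Finpartition s // P.IsPairPartition} = (2 * n - 1)‼ := by
  induction n generalizing s with
  | zero =>
    rw [mul_zero, card_eq_zero] at hs
    subst hs
    have : Subsingleton (Finpartition (∅ : Finset α)) := ⟨fun P Q =>
      Finpartition.ext (by rw [P.parts_eq_empty_iff.2 rfl, Q.parts_eq_empty_iff.2 rfl])⟩
    exact Nat.card_eq_one_iff_unique.2
      ⟨inferInstance, ⟨⟨Finpartition.empty _, by simp [IsPairPartition]⟩⟩⟩
  | succ n ih =>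
    obtain ⟨a, ha⟩ : s.Nonempty := card_pos.1 (by omega)
    rw [Nat.card_subtype_eq_card_mul (s.erase a) (fun P x => {a, x} ∈ P.parts)
      (fun P hP => hP.card_filter_pair_mem_parts ha) (n := (2 * n - 1)‼), card_erase_of_mem ha,
      hs]
    · rw [show 2 * (n + 1) - 1 = 2 * n + 1 by omega, Nat.doubleFactorial_add_one]
    · intro x hx
      have hb : {a, x} ⊆ s := insert_subset ha (singleton_subset_iff.2 (mem_of_mem_erase hx))
      have hb2 : #{a, x} = 2 := card_pair (ne_of_mem_erase hx).symm
      rw [card_isPairPartition_and_mem_parts hb2 sdiff_disjoint (sdiff_union_of_subset hb)]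
      exact ih (by rw [card_sdiff_of_subset hb, hs, hb2]; omega)

lemma card_isPairPartition_erase {a : α} (hs : Odd #s) (ha : a ∈ s) :
    Nat.card {P : Finpartition (s.erase a) // P.IsPairPartition} = (#s - 2)‼ := by
  obtain ⟨n, hn⟩ := hs
  rw [card_isPairPartition (n := n) (by rw [card_erase_of_mem ha, hn]; omega), hn,
    show 2 * n + 1 - 2 = 2 * n - 1 by omega]

end Finpartition

section Crosses

open Finpartition

variable {p q : ℕ}

def leftBlock (p q : ℕ) : Finset (Fin (p + q)) := {i | (i : ℕ) < p}

def rightBlock (p q : ℕ) : Finset (Fin (p + q)) := {i | p ≤ (i : ℕ)}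

lemma mem_leftBlock {i : Fin (p + q)} : i ∈ leftBlock p q ↔ (i : ℕ) < p := by
  simp [leftBlock]

lemma mem_rightBlock {i : Fin (p + q)} : i ∈ rightBlock p q ↔ p ≤ (i : ℕ) := by
  simp [rightBlock]

lemma card_leftBlock : #(leftBlock p q) = p := by
  rw [leftBlock, Fin.card_filter_val_lt]
  omega

lemma card_rightBlock : #(rightBlock p q) = q := by
  have h := card_filter_add_card_filter_not (s := univ) fun i : Fin (p + q) => (i : ℕ) < p
  simp only [not_lt, card_univ, Fintype.card_fin] at h
  change #(leftBlock p q) + #(rightBlock p q) = p + q at h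
  rw [card_leftBlock] at h
  omega

lemma disjoint_leftBlock_rightBlock : Disjoint (leftBlock p q) (rightBlock p q) :=
  disjoint_left.2 fun i hi hi' => by
    rw [mem_leftBlock] at hi
    rw [mem_rightBlock] at hi'
    omega

lemma not_isCross_iff {c : Finset (Fin (p + q))} :
    ¬IsCross p q c ↔ c ⊆ leftBlock p q ∨ c ⊆ rightBlock p q := by
  rw [IsCross, not_and_or, or_comm]
  simp only [not_exists, not_and, not_lt, not_le, subset_iff, mem_leftBlock, mem_rightBlock]

lemma crossCount_eq_card_filter_pair_mem_parts {P : Finpartition (univ : Finset (Fin (p + q)))}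
    (hP : P.IsPairPartition) :
    crossCount p q P = #{ij ∈ leftBlock p q ×ˢ rightBlock p q | {ij.1, ij.2} ∈ P.parts} := by
  symm
  refine card_bij (fun ij _ => {ij.1, ij.2}) ?_ ?_ ?_
  · rintro ⟨i, j⟩ hij
    simp only [mem_filter, mem_product, mem_leftBlock, mem_rightBlock] at hij ⊢
    exact ⟨hij.2, ⟨i, by simp, hij.1.1⟩, ⟨j, by simp, hij.1.2⟩⟩
  · rintro ⟨i, j⟩ hij ⟨i', j'⟩ hij' h
    simp only [mem_filter, mem_product, mem_leftBlock, mem_rightBlock] at hij hij'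
    have hi : i ∈ ({i', j'} : Finset _) := h ▸ mem_insert_self i {j}
    have hj : j ∈ ({i', j'} : Finset _) := h ▸ mem_insert_of_mem (mem_singleton_self j)
    simp only [mem_insert, mem_singleton] at hi hj
    rw [Prod.mk.injEq]
    constructor
    · rcases hi with rfl | rfl
      · rfl
      · omega
    · rcases hj with rfl | rfl
      · omega
      · rfl
  · rintro c hc
    obtain ⟨hcP, ⟨i, hic, hi⟩, ⟨j, hjc, hj⟩⟩ := mem_filter.1 hc
    have hij : i ≠ j := by rintro rfl; omega
    have hcij : {i, j} = c := eq_of_subset_of_card_le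
      (insert_subset hic (singleton_subset_iff.2 hjc)) (by rw [hP c hcP, card_pair hij])
    refine ⟨(i, j), ?_, hcij⟩
    simp only [mem_filter, mem_product, mem_leftBlock, mem_rightBlock]
    exact ⟨⟨hi, hj⟩, hcij ▸ hcP⟩

lemma crossCount_extendEquiv {i j : Fin (p + q)} (hi : (i : ℕ) < p) (hj : p ≤ (j : ℕ))
    {u : Finset (Fin (p + q))} (hb : {i, j} ≠ ∅) (hub : Disjoint u {i, j}) (hs : u ∪ {i, j} = univ)
    (Q : Finpartition u) :
    crossCount p q (extendEquiv hb hub hs Q).1 = #{c ∈ Q.parts | IsCross p q c} + 1 := by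
  rw [crossCount, extendEquiv_apply_parts, filter_insert,
    if_pos ⟨⟨i, mem_insert_self i {j}, hi⟩, ⟨j, by simp, hj⟩⟩,
    card_insert_of_notMem fun h => Q.notMem_parts_of_disjoint hb hub (mem_filter.1 h).1]

lemma crossCount_extendEquiv_eq_one_iff {i j : Fin (p + q)} (hi : i ∈ leftBlock p q)
    (hj : j ∈ rightBlock p q) (hb : {i, j} ≠ ∅)
    (hub : Disjoint ((leftBlock p q).erase i ∪ (rightBlock p q).erase j) {i, j})
    (hs : (leftBlock p q).erase i ∪ (rightBlock p q).erase j ∪ {i, j} = univ)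
    (Q : Finpartition ((leftBlock p q).erase i ∪ (rightBlock p q).erase j)) :
    crossCount p q (extendEquiv hb hub hs Q).1 = 1 ↔
      ∀ c ∈ Q.parts, c ⊆ (leftBlock p q).erase i ∨ c ⊆ (rightBlock p q).erase j := by
  rw [crossCount_extendEquiv (mem_leftBlock.1 hi) (mem_rightBlock.1 hj), add_eq_right,
    card_eq_zero, filter_eq_empty_iff]
  refine forall₂_congr fun c hc => ?_
  have hic : i ∉ c := fun h => disjoint_left.1 hub (Q.le hc h) (mem_insert_self i {j})
  have hjc : j ∉ c := fun h => disjoint_left.1 hub (Q.le hc h) (by simp)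
  rw [not_isCross_iff, subset_erase, subset_erase, and_iff_left hic, and_iff_left hjc]

lemma card_oneCross_and_mem_parts (hp : Odd p) (hq : Odd q) {i j : Fin (p + q)}
    (hi : i ∈ leftBlock p q) (hj : j ∈ rightBlock p q) :
    Nat.card {P : Finpartition (univ : Finset (Fin (p + q))) //
      (P.IsPairPartition ∧ crossCount p q P = 1) ∧ {i, j} ∈ P.parts} = (p - 2)‼ * (q - 2)‼ := by
  set L := (leftBlock p q).erase i
  set R := (rightBlock p q).erase j
  have hLR : Disjoint L R :=
    disjoint_leftBlock_rightBlock.mono (erase_subset _ _) (erase_subset _ _)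
  have hij : i ≠ j := fun h => disjoint_left.1 disjoint_leftBlock_rightBlock hi (h ▸ hj)
  have hi' := mem_leftBlock.1 hi
  have hj' := mem_rightBlock.1 hj
  have hub : Disjoint (L ∪ R) {i, j} := by
    simp only [L, R, disjoint_left, mem_union, mem_erase, mem_leftBlock, mem_rightBlock,
      mem_insert, mem_singleton]
    omega
  have hs : L ∪ R ∪ {i, j} = univ := by
    ext x
    simp only [L, R, mem_union, mem_erase, mem_leftBlock, mem_rightBlock, mem_insert,
      mem_singleton, mem_univ, iff_true]
    omega
  have hb : ({i, j} : Finset (Fin (p + q))) ≠ ∅ := insert_ne_empty i {j}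
  calc _ = Nat.card {Q : Finpartition (L ∪ R) //
          Q.IsPairPartition ∧ ∀ c ∈ Q.parts, c ⊆ L ∨ c ⊆ R} :=
        Nat.card_subtype_and_eq_of_equiv (extendEquiv hb hub hs) fun Q =>
          and_congr (isPairPartition_extendEquiv_iff (card_pair hij) hb hub hs Q)
            (crossCount_extendEquiv_eq_one_iff hi hj hb hub hs Q)
    _ = Nat.card {PQ : Finpartition L × Finpartition R //
          PQ.1.IsPairPartition ∧ PQ.2.IsPairPartition} :=
        Nat.card_subtype_and_eq_of_equiv (disjUnionEquiv hLR rfl)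
          (isPairPartition_disjUnionEquiv_iff hLR rfl)
    _ = Nat.card {Q : Finpartition L // Q.IsPairPartition} *
          Nat.card {Q : Finpartition R // Q.IsPairPartition} := by
        rw [Nat.card_congr Equiv.subtypeProdEquivProd, Nat.card_prod]
    _ = (p - 2)‼ * (q - 2)‼ := by
        rw [card_isPairPartition_erase (card_leftBlock ▸ hp) hi,
          card_isPairPartition_erase (card_rightBlock ▸ hq) hj, card_leftBlock, card_rightBlock]

end Crosses

/-- For odd `p, q`, the number of pair partitions of `{1,...,p+q}` with exactly one cross
equals `pq(p-2)!!(q-2)!!`. -/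
theorem count_pair_partitions_one_cross (p q : ℕ) (hp : Odd p) (hq : Odd q) :
    Nat.card {P : Finpartition (Finset.univ : Finset (Fin (p + q))) //
        (∀ b ∈ P.parts, b.card = 2) ∧ crossCount p q P = 1} =
      p * q * Nat.doubleFactorial (p - 2) * Nat.doubleFactorial (q - 2) := by
  rw [Nat.card_subtype_eq_card_mul (leftBlock p q ×ˢ rightBlock p q)
    (fun P ij => {ij.1, ij.2} ∈ P.parts) (n := (p - 2)‼ * (q - 2)‼), card_product, card_leftBlock,
    card_rightBlock]
  · ring
  · rintro P ⟨hP, hcross⟩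
    rw [← crossCount_eq_card_filter_pair_mem_parts hP, hcross]
  · rintro ⟨i, j⟩ hij
    rw [mem_product] at hij
    exact card_oneCross_and_mem_parts hp hq hij.1 hij.2
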